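/- For every φ ∈ L¹(𝕋), ‖φ‖_{BMO(𝕋)} ≤ 12·max{‖φ‖_{BMO_𝒟(𝕋)}, ‖φ(· − 2π/3)‖_{BMO_𝒟(𝕋)}}. -/

import Mathlib

open Real MeasureTheory Set ENNReal

/-- The average `φ_I = (1/|I|) ∫_I φ` over the arc `I = (a, a + ℓ]` (mod 2π);
for a 2π-periodic `φ` this is the average over the corresponding arc of `𝕋`. -/
noncomputable def avgIoc (φ : ℝ → ℝ) (a ℓ : ℝ) : ℝ :=
  (1 / ℓ) * ∫ x in Set.Ioc a (a + ℓ), φ x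

/-- The mean oscillation `(1/|I|) ∫_I |φ - φ_I|` over the arc `I = (a, a + ℓ]`. -/
noncomputable def oscIoc (φ : ℝ → ℝ) (a ℓ : ℝ) : ℝ :=
  (1 / ℓ) * ∫ x in Set.Ioc a (a + ℓ), |φ x - avgIoc φ a ℓ|

/-- `‖φ‖_{BMO(𝕋)}`: the supremum of mean oscillations over all arcs of `𝕋`
(arcs being images mod 2π of intervals `(a, a+ℓ]` with `0 < ℓ ≤ 2π`),
as an extended nonnegative real. -/
noncomputable def bmoNorm (φ : ℝ → ℝ) : ℝ≥0∞ :=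
  ⨆ (a : ℝ) (ℓ : ℝ) (_ : 0 < ℓ) (_ : ℓ ≤ 2 * π), ENNReal.ofReal (oscIoc φ a ℓ)

/-- `‖φ‖_{BMO_𝒟(𝕋)}`: the supremum of mean oscillations over the dyadic intervals
`D_n^k = (2πk·2^{-n}, 2π(k+1)·2^{-n}]`, `n ∈ ℕ`, `0 ≤ k < 2^n`. -/
noncomputable def dyadicBmoNorm (φ : ℝ → ℝ) : ℝ≥0∞ :=
  ⨆ (n : ℕ) (k : ℕ) (_ : k < 2 ^ n),
    ENNReal.ofReal (oscIoc φ (2 * π * k / 2 ^ n) (2 * π / 2 ^ n))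

/-! ### Auxiliary lemmas -/

lemma setInt_shift (f : ℝ → ℝ) (a ℓ s : ℝ) (hl : 0 ≤ ℓ) :
    ∫ x in Set.Ioc a (a + ℓ), f (x - s) = ∫ x in Set.Ioc (a - s) (a - s + ℓ), f x := by
  rw [← intervalIntegral.integral_of_le (by linarith : a ≤ a + ℓ),
    ← intervalIntegral.integral_of_le (by linarith : a - s ≤ a - s + ℓ),
    intervalIntegral.integral_comp_sub_right]
  congr 1; ring

lemma avgIoc_shift (φ : ℝ → ℝ) (a ℓ s : ℝ) (hl : 0 ≤ ℓ) :
    avgIoc (fun x => φ (x - s)) a ℓ = avgIoc φ (a - s) ℓ := by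
  unfold avgIoc; rw [setInt_shift φ a ℓ s hl]

lemma oscIoc_shift (φ : ℝ → ℝ) (a ℓ s : ℝ) (hl : 0 ≤ ℓ) :
    oscIoc (fun x => φ (x - s)) a ℓ = oscIoc φ (a - s) ℓ := by
  unfold oscIoc
  rw [avgIoc_shift φ a ℓ s hl, setInt_shift (fun x => |φ x - avgIoc φ (a - s) ℓ|) a ℓ s hl]

lemma oscIoc_period (φ : ℝ → ℝ) (hper : Function.Periodic φ (2 * π)) (a ℓ : ℝ) (hl : 0 ≤ ℓ)
    (m : ℤ) : oscIoc φ (a + 2 * π * m) ℓ = oscIoc φ a ℓ := by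
  have h : (fun x => φ (x - 2 * π * m)) = φ := by
    funext x
    have := (hper.int_mul m).sub_eq x
    rw [show (m : ℝ) * (2 * π) = 2 * π * m by ring] at this
    exact this
  have := oscIoc_shift φ (a + 2 * π * m) ℓ (2 * π * m) hl
  rw [h] at this
  rw [this]; congr 1; ring

lemma intervalIntegrable_of_periodic {φ : ℝ → ℝ} (hper : Function.Periodic φ (2 * π))
    (hint : IntegrableOn φ (Set.Ioc 0 (2 * π))) (a b : ℝ) :
    IntervalIntegrable φ volume a b := by
  have hπ : (0:ℝ) < 2 * π := by positivity
  have base : IntervalIntegrable φ volume 0 (2 * π) :=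
    (intervalIntegrable_iff_integrableOn_Ioc_of_le hπ.le).2 hint
  have per : ∀ m : ℤ, IntervalIntegrable φ volume (2 * π * m) (2 * π * (m + 1)) := by
    intro m
    have h := base.comp_sub_right (2 * π * m)
    have hf : (fun x => φ (x - 2 * π * m)) = φ := by
      funext x
      have := (hper.int_mul m).sub_eq x
      rwa [show (m : ℝ) * (2 * π) = 2 * π * m by ring] at this
    rw [hf] at h
    have e1 : (0:ℝ) + 2 * π * m = 2 * π * m := by ring
    have e2 : 2 * π + 2 * π * m = 2 * π * ((m:ℝ) + 1) := by ring
    rwa [e1, e2] at h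
  have big : ∀ N : ℕ, IntervalIntegrable φ volume (-(2 * π * N)) (2 * π * N) := by
    intro N
    induction N with
    | zero => simp
    | succ n ih =>
      have h1 := per (-(n + 1) : ℤ)
      have h2 := per (n : ℤ)
      push_cast at h1 h2
      have e1 : 2 * π * (-((n:ℝ) + 1)) = -(2 * π * (n + 1 : ℕ)) := by push_cast; ring
      have e2 : 2 * π * (-((n:ℝ) + 1) + 1) = -(2 * π * n) := by push_cast; ring
      have e3 : 2 * π * ((n:ℝ) + 1) = 2 * π * ((n:ℕ) + 1 : ℕ) := by push_cast; ring
      rw [e1, e2] at h1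
      rw [e3] at h2
      exact (h1.trans ih).trans h2
  obtain ⟨N, hN⟩ := exists_nat_ge ((max |a| |b|) / (2 * π))
  have hN' : max |a| |b| ≤ 2 * π * N := by
    rw [div_le_iff₀ hπ] at hN; linarith
  refine (big N).mono_set ?_
  rw [Set.uIcc_subset_uIcc_iff_le]
  have ha := abs_le.1 (le_trans (le_max_left |a| |b|) hN')
  have hb := abs_le.1 (le_trans (le_max_right |a| |b|) hN')
  constructor
  · refine le_min ?_ ?_ <;> (rw [min_le_iff]; left; linarith [ha.1, hb.1])
  · refine max_le ?_ ?_ <;> (rw [le_max_iff]; right; linarith [ha.2, hb.2])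

lemma oscIoc_nonneg (φ : ℝ → ℝ) (a ℓ : ℝ) (hℓ : 0 ≤ ℓ) : 0 ≤ oscIoc φ a ℓ := by
  apply mul_nonneg (by positivity)
  exact setIntegral_nonneg measurableSet_Ioc (fun x _ => abs_nonneg _)

lemma integrableOn_abs_sub {φ : ℝ → ℝ} {s : Set ℝ} (h : IntegrableOn φ s) (hs : volume s < ⊤)
    (m : ℝ) : IntegrableOn (fun x => |φ x - m|) s :=
  (h.sub (integrableOn_const hs.ne)).abs

/-- Core comparison: if the mass of `|φ - avg_D|` over `I` is dominated by its mass over `D`,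
and `2δ ≤ 12ℓ`, then `osc(I) ≤ 12 osc(D)`. -/
lemma osc_le_core (φ : ℝ → ℝ) (a ℓ c δ : ℝ) (hℓ : 0 < ℓ) (hδ : 0 < δ)
    (hratio : 2 * δ ≤ 12 * ℓ)
    (hI : IntegrableOn φ (Set.Ioc a (a + ℓ)))
    (hAB : ∫ x in Set.Ioc a (a + ℓ), |φ x - avgIoc φ c δ| ≤
           ∫ x in Set.Ioc c (c + δ), |φ x - avgIoc φ c δ|) :
    oscIoc φ a ℓ ≤ 12 * oscIoc φ c δ := by
  set I := Set.Ioc a (a + ℓ) with hI_def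
  set D := Set.Ioc c (c + δ) with hD_def
  set m := avgIoc φ c δ with hm_def
  have hIvol : volume I < ⊤ := measure_Ioc_lt_top
  have hIvol' : (volume I).toReal = ℓ := by
    rw [hI_def, Real.volume_Ioc, ENNReal.toReal_ofReal (by linarith)]; ring
  have hIm : IntegrableOn (fun x => |φ x - m|) I := integrableOn_abs_sub hI hIvol m
  have hIa : IntegrableOn (fun x => |φ x - avgIoc φ a ℓ|) I :=
    integrableOn_abs_sub hI hIvol _
  have h_sub_int : ∫ x in I, (φ x - m) = (∫ x in I, φ x) - ℓ * m := by
    rw [integral_sub hI (integrableOn_const hIvol.ne)]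
    rw [setIntegral_const, measureReal_def, hIvol', smul_eq_mul]
  have hℓ0 : ℓ ≠ 0 := hℓ.ne'
  have havg : |avgIoc φ a ℓ - m| ≤ (1 / ℓ) * ∫ x in I, |φ x - m| := by
    have h1 : avgIoc φ a ℓ - m = (1 / ℓ) * ∫ x in I, (φ x - m) := by
      rw [h_sub_int, avgIoc]
      field_simp
      rfl
    rw [h1, abs_mul, abs_of_nonneg (by positivity : (0:ℝ) ≤ 1/ℓ)]
    gcongr
    simpa [Real.norm_eq_abs] using norm_integral_le_integral_norm (μ := volume.restrict I)
      (fun x => φ x - m)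
  have key : ∫ x in I, |φ x - avgIoc φ a ℓ| ≤
      (∫ x in I, |φ x - m|) + ℓ * |avgIoc φ a ℓ - m| := by
    have hsum : IntegrableOn (fun x => |φ x - m| + |avgIoc φ a ℓ - m|) I :=
      hIm.add (integrableOn_const hIvol.ne)
    have h2 : ∫ x in I, (|φ x - m| + |avgIoc φ a ℓ - m|) =
        (∫ x in I, |φ x - m|) + ℓ * |avgIoc φ a ℓ - m| := by
      rw [integral_add hIm (integrableOn_const hIvol.ne), setIntegral_const, measureReal_def, hIvol',
        smul_eq_mul]
    rw [← h2]
    refine setIntegral_mono_on hIa hsum measurableSet_Ioc (fun x _ => ?_)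
    have e : φ x - avgIoc φ a ℓ = (φ x - m) + (m - avgIoc φ a ℓ) := by ring
    rw [e]
    refine le_trans (abs_add_le _ _) ?_
    rw [abs_sub_comm m (avgIoc φ a ℓ)]
  have hδ0 : δ ≠ 0 := hδ.ne'
  have hosc_D : ∫ x in D, |φ x - m| = δ * oscIoc φ c δ := by
    rw [oscIoc]; field_simp; rfl
  have hosc_D_nonneg : 0 ≤ oscIoc φ c δ := oscIoc_nonneg φ c δ hδ.le
  have step : oscIoc φ a ℓ ≤ (2 / ℓ) * ∫ x in D, |φ x - m| := by
    rw [oscIoc]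
    have : (1 / ℓ) * ∫ x in I, |φ x - avgIoc φ a ℓ| ≤
        (1 / ℓ) * ((∫ x in I, |φ x - m|) + ℓ * |avgIoc φ a ℓ - m|) :=
      mul_le_mul_of_nonneg_left key (by positivity)
    refine le_trans this ?_
    have h3 : ℓ * |avgIoc φ a ℓ - m| ≤ ∫ x in I, |φ x - m| := by
      have := mul_le_mul_of_nonneg_left havg hℓ.le
      calc ℓ * |avgIoc φ a ℓ - m| ≤ ℓ * ((1 / ℓ) * ∫ x in I, |φ x - m|) := this
        _ = ∫ x in I, |φ x - m| := by field_simp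
    have h4 : (1 / ℓ) * ((∫ x in I, |φ x - m|) + ℓ * |avgIoc φ a ℓ - m|) ≤
        (1 / ℓ) * (2 * ∫ x in I, |φ x - m|) := by gcongr; linarith
    refine le_trans h4 ?_
    rw [show (2 / ℓ) * ∫ x in D, |φ x - m| = (1/ℓ) * (2 * ∫ x in D, |φ x - m|) by ring]
    gcongr
  rw [hosc_D] at step
  calc oscIoc φ a ℓ ≤ (2 / ℓ) * (δ * oscIoc φ c δ) := step
    _ = (2 * δ / ℓ) * oscIoc φ c δ := by ring
    _ ≤ 12 * oscIoc φ c δ := by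
        apply mul_le_mul_of_nonneg_right _ hosc_D_nonneg
        rw [div_le_iff₀ hℓ]; linarith

lemma osc_le_of_subset (φ : ℝ → ℝ) (a ℓ c δ : ℝ) (hℓ : 0 < ℓ) (hδ : 0 < δ)
    (hratio : 2 * δ ≤ 12 * ℓ) (hsub : Set.Ioc a (a + ℓ) ⊆ Set.Ioc c (c + δ))
    (hD : IntegrableOn φ (Set.Ioc c (c + δ))) :
    oscIoc φ a ℓ ≤ 12 * oscIoc φ c δ := by
  refine osc_le_core φ a ℓ c δ hℓ hδ hratio (hD.mono_set hsub) ?_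
  refine setIntegral_mono_set (integrableOn_abs_sub hD measure_Ioc_lt_top _)
    (Filter.Eventually.of_forall fun x => abs_nonneg _) (HasSubset.Subset.eventuallyLE hsub)

lemma osc_le_full (φ : ℝ → ℝ) (hper : Function.Periodic φ (2 * π))
    (hii : ∀ a b : ℝ, IntervalIntegrable φ volume a b) (a ℓ : ℝ)
    (hℓ : 0 < ℓ) (h3 : 2 * π ≤ 3 * ℓ) (h2 : ℓ ≤ 2 * π) :
    oscIoc φ a ℓ ≤ 12 * oscIoc φ 0 (2 * π) := by
  have hπ : (0:ℝ) < 2 * π := by positivity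
  set m := avgIoc φ 0 (2 * π) with hm_def
  refine osc_le_core φ a ℓ 0 (2 * π) hℓ hπ (by linarith)
    ((intervalIntegrable_iff_integrableOn_Ioc_of_le (by linarith)).1 (hii a (a + ℓ))) ?_
  have hint2 : IntegrableOn (fun x => |φ x - m|) (Set.Ioc a (a + 2 * π)) :=
    integrableOn_abs_sub
      ((intervalIntegrable_iff_integrableOn_Ioc_of_le (by linarith)).1 (hii a (a + 2 * π)))
      measure_Ioc_lt_top m
  have hgper : Function.Periodic (fun x => |φ x - m|) (2 * π) := fun x => by
    simp [hper x]
  calc ∫ x in Set.Ioc a (a + ℓ), |φ x - m|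
      ≤ ∫ x in Set.Ioc a (a + 2 * π), |φ x - m| := by
        refine setIntegral_mono_set hint2
          (Filter.Eventually.of_forall fun x => abs_nonneg _)
          (HasSubset.Subset.eventuallyLE (Set.Ioc_subset_Ioc_right (by linarith)))
    _ = ∫ x in Set.Ioc 0 (0 + 2 * π), |φ x - m| := by
        rw [← intervalIntegral.integral_of_le (by linarith : a ≤ a + 2 * π),
          ← intervalIntegral.integral_of_le (by linarith : (0:ℝ) ≤ 0 + 2 * π)]
        exact hgper.intervalIntegral_add_eq a 0

/-- write `j·δ` (with `δ = 2π/2^n`) as a dyadic point `2πk/2^n` plus a multiple of `2π`. -/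
lemma dyadic_rep (n : ℕ) (j : ℤ) :
    ∃ (k : ℕ) (m : ℤ), k < 2 ^ n ∧
      (j : ℝ) * (2 * π / 2 ^ n) = 2 * π * k / 2 ^ n + 2 * π * m := by
  have h2 : (0:ℤ) < 2 ^ n := by positivity
  refine ⟨(j % 2 ^ n).toNat, j / 2 ^ n, ?_, ?_⟩
  · have h1 := Int.emod_lt_of_pos j h2
    have h2' : ((2 ^ n : ℕ) : ℤ) = 2 ^ n := by push_cast; ring
    omega
  · have hmod := Int.emod_nonneg j h2.ne'
    have hdm := Int.mul_ediv_add_emod j (2 ^ n)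
    have hZ : (j:ℤ) = 2 ^ n * (j / 2 ^ n) + ((j % 2 ^ n).toNat : ℤ) := by
      rw [Int.toNat_of_nonneg hmod]; linarith
    have hcast : (j : ℝ) = 2 ^ n * (j / 2 ^ n : ℤ) + ((j % 2 ^ n).toNat : ℕ) := by
      exact_mod_cast hZ
    rw [hcast]
    have hp : (0:ℝ) < 2 ^ n := by positivity
    field_simp
    ring

lemma two_pow_mod_three (n : ℕ) : 2 ^ n % 3 = 1 ∨ 2 ^ n % 3 = 2 := by
  induction n with
  | zero => left; rfl
  | succ k ih => rcases ih with h | h <;> [right; left] <;> omega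

/-- One-third trick: an interval of length `ℓ ≤ 2π/3` is contained, modulo `2π`, in a dyadic
cell of the standard grid or of the grid shifted by `-2π/3`, of length `≤ 6ℓ`. -/
lemma grid_cover (a ℓ : ℝ) (hℓ : 0 < ℓ) (hℓ' : 3 * ℓ ≤ 2 * π) :
    ∃ (n k : ℕ) (m : ℤ), k < 2 ^ n ∧ 2 * π / 2 ^ n ≤ 6 * ℓ ∧
      (Set.Ioc a (a + ℓ) ⊆ Set.Ioc (2 * π * k / 2 ^ n + 2 * π * m)
          (2 * π * k / 2 ^ n + 2 * π * m + 2 * π / 2 ^ n) ∨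
       Set.Ioc a (a + ℓ) ⊆ Set.Ioc (2 * π * k / 2 ^ n - 2 * π / 3 + 2 * π * m)
          (2 * π * k / 2 ^ n - 2 * π / 3 + 2 * π * m + 2 * π / 2 ^ n)) := by
  have hπ : (0:ℝ) < 2 * π := by positivity
  have hex : ∃ n : ℕ, 2 * π < 3 * ℓ * 2 ^ (n + 1) := by
    obtain ⟨n, hn⟩ := pow_unbounded_of_one_lt (2 * π / (3 * ℓ)) (by norm_num : (1:ℝ) < 2)
    refine ⟨n, ?_⟩
    have h3ℓ : (0:ℝ) < 3 * ℓ := by linarith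
    rw [div_lt_iff₀ h3ℓ] at hn
    have : (2:ℝ) ^ n ≤ 2 ^ (n + 1) := by
      apply pow_le_pow_right₀ (by norm_num) (by omega)
    nlinarith
  set n := Nat.find hex with hn_def
  have hP : 2 * π < 3 * ℓ * 2 ^ (n + 1) := Nat.find_spec hex
  set δ := 2 * π / 2 ^ n with hδ_def
  have hpow : (0:ℝ) < 2 ^ n := by positivity
  have hδpos : 0 < δ := by positivity
  have h2π : 2 * π = 2 ^ n * δ := by rw [hδ_def]; field_simp
  have h6 : δ ≤ 6 * ℓ := by
    rw [hδ_def, div_le_iff₀ hpow]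
    have : (2:ℝ) ^ (n + 1) = 2 * 2 ^ n := by ring
    nlinarith
  have h3 : 3 * ℓ ≤ δ := by
    rcases Nat.eq_zero_or_pos n with h0 | hpos
    · have hδ2 : δ = 2 * π := by rw [hδ_def, h0]; norm_num
      rw [hδ2]; exact hℓ'
    · have hnot := Nat.find_min hex (show n - 1 < n by omega)
      push_neg at hnot
      have he : n - 1 + 1 = n := by omega
      rw [he] at hnot
      rw [hδ_def, le_div_iff₀ hpow]
      nlinarith
  set j := ⌊a / δ⌋ with hj_def
  have hj1 : (j:ℝ) * δ ≤ a := by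
    rw [hj_def]
    have := Int.floor_le (a / δ)
    calc (⌊a / δ⌋ : ℝ) * δ ≤ (a / δ) * δ := by nlinarith
      _ = a := by field_simp
  have hj2 : a < ((j:ℝ) + 1) * δ := by
    have := Int.lt_floor_add_one (a / δ)
    calc a = (a / δ) * δ := by field_simp
      _ < ((j:ℝ) + 1) * δ := by rw [hj_def]; nlinarith
  by_cases hcase : a + ℓ ≤ ((j:ℝ) + 1) * δ
  · obtain ⟨k, m, hk, hrep⟩ := dyadic_rep n j
    refine ⟨n, k, m, hk, h6, Or.inl ?_⟩
    rw [← hδ_def, ← hrep]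
    intro x hx
    rcases hx with ⟨hx1, hx2⟩
    constructor
    · linarith
    · have : (j:ℝ) * δ + δ = ((j:ℝ) + 1) * δ := by ring
      linarith
  · push_neg at hcase
    obtain ⟨q, r, hr, hqr⟩ : ∃ q r : ℕ, (r = 1 ∨ r = 2) ∧ 2 ^ n = 3 * q + r :=
      ⟨2 ^ n / 3, 2 ^ n % 3, two_pow_mod_three n, by omega⟩
    obtain ⟨k, m, hk, hrep⟩ := dyadic_rep n (j + 1 + q)
    refine ⟨n, k, m, hk, h6, Or.inr ?_⟩
    have hqr' : (2:ℝ) ^ n = 3 * q + r := by exact_mod_cast congrArg (Nat.cast (R := ℝ)) hqr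
    have hp_eq : 2 * π * k / 2 ^ n - 2 * π / 3 + 2 * π * m
        = ((j:ℝ) + 1) * δ - r * δ / 3 := by
      have h1 : ((j:ℝ) + 1 + q) * δ = 2 * π * k / 2 ^ n + 2 * π * m := by
        rw [hδ_def]; exact_mod_cast hrep
      have h2 : 2 * π / 3 = (3 * (q:ℝ) + r) * δ / 3 := by rw [h2π, hqr']
      nlinarith [h1, h2]
    rw [← hδ_def, hp_eq]
    have hr1 : (1:ℝ) ≤ r := by rcases hr with h | h <;> rw [h] <;> norm_num
    have hr2 : (r:ℝ) ≤ 2 := by rcases hr with h | h <;> rw [h] <;> norm_num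
    intro x hx
    rcases hx with ⟨hx1, hx2⟩
    constructor
    · have : ((j:ℝ) + 1) * δ - r * δ / 3 ≤ a := by nlinarith
      linarith
    · have : a + ℓ ≤ ((j:ℝ) + 1) * δ - r * δ / 3 + δ := by nlinarith
      linarith

lemma ofReal_le_twelve_mul {x y : ℝ} (h : x ≤ 12 * y) {M : ℝ≥0∞}
    (hM : ENNReal.ofReal y ≤ M) : ENNReal.ofReal x ≤ 12 * M := by
  calc ENNReal.ofReal x ≤ ENNReal.ofReal (12 * y) := ENNReal.ofReal_le_ofReal h
    _ = ENNReal.ofReal 12 * ENNReal.ofReal y := ENNReal.ofReal_mul (by norm_num)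
    _ ≤ 12 * M := by
        rw [show ENNReal.ofReal 12 = (12:ℝ≥0∞) by norm_num]
        exact mul_le_mul_right hM 12

/-- **Example.** For every 2π-periodic `φ ∈ L¹(𝕋)`,
`‖φ‖_{BMO(𝕋)} ≤ 12 · max {‖φ‖_{BMO_𝒟(𝕋)}, ‖φ(· - 2π/3)‖_{BMO_𝒟(𝕋)}}`. -/
theorem bmo_le_twelve_max_dyadic (φ : ℝ → ℝ) (hper : Function.Periodic φ (2 * π))
    (hint : IntegrableOn φ (Set.Ioc 0 (2 * π))) :
    bmoNorm φ ≤ 12 *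
      max (dyadicBmoNorm φ) (dyadicBmoNorm fun x => φ (x - 2 * π / 3)) := by
  have hπ : (0:ℝ) < 2 * π := by positivity
  have hii : ∀ a b : ℝ, IntervalIntegrable φ volume a b :=
    intervalIntegrable_of_periodic hper hint
  set ψ : ℝ → ℝ := fun x => φ (x - 2 * π / 3) with hψ_def
  have hD1 : ∀ (n k : ℕ), k < 2 ^ n →
      ENNReal.ofReal (oscIoc φ (2 * π * k / 2 ^ n) (2 * π / 2 ^ n)) ≤ dyadicBmoNorm φ :=
    fun n k hk => le_iSup_of_le n (le_iSup_of_le k (le_iSup_of_le hk le_rfl))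
  have hD2 : ∀ (n k : ℕ), k < 2 ^ n →
      ENNReal.ofReal (oscIoc ψ (2 * π * k / 2 ^ n) (2 * π / 2 ^ n)) ≤ dyadicBmoNorm ψ :=
    fun n k hk => le_iSup_of_le n (le_iSup_of_le k (le_iSup_of_le hk le_rfl))
  rw [bmoNorm]
  refine iSup_le fun a => iSup_le fun ℓ => iSup_le fun hℓ => iSup_le fun hℓ2 => ?_
  by_cases hsmall : 3 * ℓ ≤ 2 * π
  · -- small arc: use the one-third trick
    obtain ⟨n, k, m, hk, h6, hor⟩ := grid_cover a ℓ hℓ hsmall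
    have hpow : (0:ℝ) < 2 ^ n := by positivity
    have hδpos : (0:ℝ) < 2 * π / 2 ^ n := by positivity
    have hratio : 2 * (2 * π / 2 ^ n) ≤ 12 * ℓ := by linarith
    rcases hor with hsub | hsub
    · -- standard dyadic grid
      set c := 2 * π * k / 2 ^ n with hc_def
      have hD : IntegrableOn φ (Set.Ioc (c + 2 * π * m) (c + 2 * π * m + 2 * π / 2 ^ n)) :=
        (intervalIntegrable_iff_integrableOn_Ioc_of_le (by linarith)).1 (hii _ _)
      have hosc := osc_le_of_subset φ a ℓ (c + 2 * π * m) (2 * π / 2 ^ n) hℓ hδpos hratio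
        hsub hD
      rw [oscIoc_period φ hper c (2 * π / 2 ^ n) hδpos.le m] at hosc
      exact (ofReal_le_twelve_mul hosc (hD1 n k hk)).trans
        (mul_le_mul_right (le_max_left _ _) 12)
    · -- shifted grid
      set c := 2 * π * k / 2 ^ n - 2 * π / 3 with hc_def
      have hD : IntegrableOn φ (Set.Ioc (c + 2 * π * m) (c + 2 * π * m + 2 * π / 2 ^ n)) :=
        (intervalIntegrable_iff_integrableOn_Ioc_of_le (by linarith)).1 (hii _ _)
      have hosc := osc_le_of_subset φ a ℓ (c + 2 * π * m) (2 * π / 2 ^ n) hℓ hδpos hratio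
        hsub hD
      rw [oscIoc_period φ hper c (2 * π / 2 ^ n) hδpos.le m] at hosc
      have hshift : oscIoc ψ (2 * π * k / 2 ^ n) (2 * π / 2 ^ n) = oscIoc φ c (2 * π / 2 ^ n) := by
        rw [hψ_def, hc_def]
        exact oscIoc_shift φ (2 * π * k / 2 ^ n) (2 * π / 2 ^ n) (2 * π / 3) hδpos.le
      rw [← hshift] at hosc
      exact (ofReal_le_twelve_mul hosc (hD2 n k hk)).trans
        (mul_le_mul_right (le_max_right _ _) 12)
  · -- large arc: compare with the whole circle `D_0^0`
    push_neg at hsmall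
    have hosc := osc_le_full φ hper hii a ℓ hℓ hsmall.le hℓ2
    have h00 : oscIoc φ 0 (2 * π) = oscIoc φ (2 * π * (0:ℕ) / 2 ^ (0:ℕ)) (2 * π / 2 ^ (0:ℕ)) := by
      norm_num
    rw [h00] at hosc
    exact (ofReal_le_twelve_mul hosc (hD1 0 0 (by norm_num))).trans
      (mul_le_mul_right (le_max_left _ _) 12)
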